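/- Let v ∈ S¹, c > 0, and γ : I → ℝ² a C¹ curve with ⟨γ'(t),v⟩ ≥ c for all t ∈ I. Let (Σ_p)_{p≥0} be a filtration of sub-σ-algebras of the Borel σ-algebra on I, and let β_p := E[γ' | Σ_p] denote the conditional expectation of γ' given Σ_p with respect to Lebesgue measure ℒ on I. Define the probability measure μ^v on I by μ^v(A) := (∫_A ⟨γ'(t),v⟩ dt) / (∫_I ⟨γ'(t),v⟩ dt). Then ⟨β_p(t),v⟩ ≥ c for almost every t ∈ I, the sequence of functions X_p(t) := ⟨β_p(t),v^⊥⟩ / ⟨β_p(t),v⟩ (p ≥ 0) is a martingale with respect to the filtration (Σ_p)_{p≥0} and the measure μ^v, and |X_p(t)| ≤ 1/c for μ^v-almost every t, so in particular ‖X_p‖_{L²(μ^v)} ≤ 1/c for all p ≥ 0. -/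

import Mathlib

open MeasureTheory Filter Metric Set Topology RealInnerProductSpace ENNReal NNReal

noncomputable section

/-- The Euclidean plane. -/
abbrev E2 := EuclideanSpace ℝ (Fin 2)

/-- Rotation of a planar vector by `π/2`. -/
def perp (v : E2) : E2 := (WithLp.equiv 2 (Fin 2 → ℝ)).symm ![-(v 1), v 0]

/-- `IsC1Curve a b γ γ'` : `γ` restricted to the compact nondegenerate interval `[a,b]`
is a C¹ curve with (one-sided at endpoints) derivative `γ'`, continuous and of unit
norm on `[a,b]`. -/
def IsC1Curve (a b : ℝ) (γ γ' : ℝ → E2) : Prop :=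
  a < b ∧ ContinuousOn γ' (Set.Icc a b) ∧
    (∀ t ∈ Set.Icc a b, HasDerivWithinAt γ (γ' t) (Set.Icc a b) t) ∧
    (∀ t ∈ Set.Icc a b, ‖γ' t‖ = 1)

/-!
Conditioning commutes with the linear functionals `⟪·, v⟫` and `⟪·, v^⊥⟫`, so
`⟪β_p, v⟫ = E[⟪γ', v⟫ | Σ_p] ≥ c` and `|⟪β_p, v^⊥⟫| = |E[⟪γ', v^⊥⟫ | Σ_p]| ≤ 1`, whence
`|X_p| ≤ 1/c`. For the martingale property, note that `μ^v` has density `ρ ∝ ⟪γ', v⟫` and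
`X_p · E[ρ | Σ_p] = E[f | Σ_p]` with `f ∝ ⟪γ', v^⊥⟫`. Pulling out the `Σ_p`-measurable factor
`X_p` gives `∫_A X_p dμ^v = ∫_A X_p ρ = ∫_A E[f | Σ_p] = ∫_A f` for every `A ∈ Σ_p`, and the
right side does not depend on `p`.
-/

lemma norm_perp (v : E2) : ‖perp v‖ = ‖v‖ := by
  simp [EuclideanSpace.norm_eq, perp, Fin.sum_univ_two, add_comm]

lemma abs_inner_perp_le_one {u v : E2} (hu : ‖u‖ = 1) (hv : ‖v‖ = 1) : |⟪u, perp v⟫| ≤ 1 :=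
  (abs_real_inner_le_norm u (perp v)).trans_eq (by rw [hu, norm_perp, hv, one_mul])

lemma setIntegral_Icc_pos_of_le {f : ℝ → ℝ} {a b c : ℝ} (hab : a < b) (hc : 0 < c)
    (hf : IntegrableOn f (Icc a b)) (hcf : ∀ t ∈ Icc a b, c ≤ f t) :
    0 < ∫ t in Icc a b, f t :=
  calc 0 < c * volume.real (Icc a b) := by
        rw [Real.volume_real_Icc_of_le hab.le]; exact mul_pos hc (sub_pos.mpr hab)
    _ ≤ ∫ t in Icc a b, f t :=
        setIntegral_ge_of_const_le_real measurableSet_Icc measure_Icc_lt_top.ne hcf hf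

lemma abs_div_le_div_of_le {x y R c : ℝ} (hx : |x| ≤ R) (hc : 0 < c) (hy : c ≤ y) :
    |x / y| ≤ R / c := by
  rw [abs_div, abs_of_pos (hc.trans_le hy)]
  exact div_le_div₀ ((abs_nonneg x).trans hx) hx hc hy

namespace MeasureTheory

variable {α : Type*} {m0 : MeasurableSpace α} {μ : Measure α}

lemma isProbabilityMeasure_withDensity_div_integral {ρ : α → ℝ} (hρ : Integrable ρ μ)
    (hρ_nonneg : 0 ≤ᵐ[μ] ρ) (hρ_pos : 0 < ∫ t, ρ t ∂μ) :
    IsProbabilityMeasure (μ.withDensity fun t => ENNReal.ofReal (ρ t / ∫ s, ρ s ∂μ)) := by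
  constructor
  rw [withDensity_apply _ MeasurableSet.univ, Measure.restrict_univ,
    ← ofReal_integral_eq_lintegral_ofReal (hρ.div_const _)
      (hρ_nonneg.mono fun t ht => div_nonneg ht hρ_pos.le),
    integral_div, div_self hρ_pos.ne', ENNReal.ofReal_one]

section WithDensity

variable {f ρ : α → ℝ}

lemma setIntegral_withDensity_ofReal (hρ : AEMeasurable ρ μ) (hρ_nonneg : 0 ≤ᵐ[μ] ρ)
    (Y : α → ℝ) {s : Set α} (hs : MeasurableSet s) :
    ∫ t in s, Y t ∂(μ.withDensity fun t => ENNReal.ofReal (ρ t)) = ∫ t in s, (Y * ρ) t ∂μ := by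
  rw [setIntegral_withDensity_eq_setIntegral_toReal_smul₀ hρ.ennreal_ofReal.restrict
    (ae_of_all _ fun _ => ENNReal.ofReal_lt_top) _ hs]
  refine setIntegral_congr_ae hs ?_
  filter_upwards [hρ_nonneg] with t ht _
  simp [ENNReal.toReal_ofReal ht, mul_comm]

variable [IsFiniteMeasure μ]

lemma setIntegral_withDensity_eq_setIntegral_of_mul_condExp_ae_eq {m : MeasurableSpace α}
    (hm : m ≤ m0) (hf : Integrable f μ) (hρ : Integrable ρ μ) (hρ_nonneg : 0 ≤ᵐ[μ] ρ)
    {Y : α → ℝ} (hY : StronglyMeasurable[m] Y)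
    (hY_int : Integrable Y (μ.withDensity fun t => ENNReal.ofReal (ρ t)))
    (hYρ : Y * μ[ρ|m] =ᵐ[μ] μ[f|m]) {s : Set α} (hs : MeasurableSet[m] s) :
    ∫ t in s, Y t ∂(μ.withDensity fun t => ENNReal.ofReal (ρ t)) = ∫ t in s, f t ∂μ := by
  have hρ_toReal : (fun t => (ENNReal.ofReal (ρ t)).toReal) =ᵐ[μ] ρ :=
    hρ_nonneg.mono fun t ht => ENNReal.toReal_ofReal ht
  have hρ_meas : AEMeasurable (fun t => ENNReal.ofReal (ρ t)) μ :=
    hρ.aemeasurable.ennreal_ofReal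
  have hYρ_int : Integrable (Y * ρ) μ := by
    rw [integrable_withDensity_iff_integrable_smul₀' hρ_meas
      (ae_of_all _ fun _ => ENNReal.ofReal_lt_top)] at hY_int
    refine hY_int.congr ?_
    filter_upwards [hρ_toReal] with t ht
    simp [ht, mul_comm]
  calc ∫ t in s, Y t ∂(μ.withDensity fun t => ENNReal.ofReal (ρ t))
      = ∫ t in s, (Y * ρ) t ∂μ :=
        setIntegral_withDensity_ofReal hρ.aemeasurable hρ_nonneg Y (hm s hs)
    _ = ∫ t in s, μ[Y * ρ|m] t ∂μ := (setIntegral_condExp hm hYρ_int hs).symm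
    _ = ∫ t in s, μ[f|m] t ∂μ := by
        refine setIntegral_congr_ae (hm s hs) ?_
        filter_upwards [condExp_mul_of_stronglyMeasurable_left hY hYρ_int hρ, hYρ]
          with t h₁ h₂ _
        rw [h₁, h₂]
    _ = ∫ t in s, f t ∂μ := setIntegral_condExp hm hf hs

theorem martingale_withDensity_of_mul_condExp_ae_eq {ι : Type*} [Preorder ι]
    {ℱ : Filtration ι m0} {X : ι → α → ℝ} (hf : Integrable f μ) (hρ : Integrable ρ μ)
    (hρ_nonneg : 0 ≤ᵐ[μ] ρ) (hX_adapted : StronglyAdapted ℱ X)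
    (hX_int : ∀ i, Integrable (X i) (μ.withDensity fun t => ENNReal.ofReal (ρ t)))
    (hX : ∀ i, X i * μ[ρ|ℱ i] =ᵐ[μ] μ[f|ℱ i]) :
    Martingale X ℱ (μ.withDensity fun t => ENNReal.ofReal (ρ t)) := by
  have : IsFiniteMeasure (μ.withDensity fun t => ENNReal.ofReal (ρ t)) :=
    isFiniteMeasure_withDensity_ofReal hρ.hasFiniteIntegral
  refine ⟨hX_adapted, fun i j hij => (ae_eq_condExp_of_forall_setIntegral_eq (ℱ.le i)
    (hX_int j) (fun s _ _ => (hX_int i).integrableOn) (fun s hs _ => ?_)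
    (hX_adapted i).aestronglyMeasurable).symm⟩
  rw [setIntegral_withDensity_eq_setIntegral_of_mul_condExp_ae_eq (ℱ.le i) hf hρ hρ_nonneg
      (hX_adapted i) (hX_int i) (hX i) hs,
    setIntegral_withDensity_eq_setIntegral_of_mul_condExp_ae_eq (ℱ.le j) hf hρ hρ_nonneg
      (hX_adapted j) (hX_int j) (hX j) (ℱ.mono hij s hs)]

end WithDensity

section Inner

variable {E : Type*} [NormedAddCommGroup E] [InnerProductSpace ℝ E]

lemma stronglyAdapted_inner_div_inner_condExp {ι : Type*} [Preorder ι] (ℱ : Filtration ι m0)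
    (g : α → E) (v w : E) :
    StronglyAdapted ℱ fun i t => ⟪μ[g|ℱ i] t, w⟫ / ⟪μ[g|ℱ i] t, v⟫ := fun _ =>
  ((stronglyMeasurable_condExp.inner stronglyMeasurable_const).measurable.div
    (stronglyMeasurable_condExp.inner stronglyMeasurable_const).measurable).stronglyMeasurable

variable [CompleteSpace E] {m : MeasurableSpace α} {g : α → E}

lemma inner_condExp_ae_eq (hg : Integrable g μ) (w : E) :
    (fun t => ⟪μ[g|m] t, w⟫) =ᵐ[μ] μ[fun t => ⟪g t, w⟫|m] := by
  have h := (innerSL ℝ w).comp_condExp_comm (m := m) hg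
  simp only [Function.comp_def, innerSL_apply_apply] at h
  simp_rw [real_inner_comm w]
  exact h

lemma ae_le_inner_condExp [IsFiniteMeasure μ] (hm : m ≤ m0) (hg : Integrable g μ) {w : E}
    {c : ℝ} (hcg : ∀ᵐ t ∂μ, c ≤ ⟪g t, w⟫) : ∀ᵐ t ∂μ, c ≤ ⟪μ[g|m] t, w⟫ := by
  have h := condExp_mono (m := m) (integrable_const c) (hg.inner_const w) hcg
  rw [condExp_const hm] at h
  filter_upwards [h, inner_condExp_ae_eq hg w] with t h₁ h₂
  rwa [h₂]

lemma ae_abs_inner_condExp_le (hg : Integrable g μ) {w : E} {R : ℝ}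
    (hR : ∀ᵐ t ∂μ, |⟪g t, w⟫| ≤ R) : ∀ᵐ t ∂μ, |⟪μ[g|m] t, w⟫| ≤ R := by
  filter_upwards [ae_bdd_abs_condExp_of_ae_bdd_abs (m := m) hR, inner_condExp_ae_eq hg w]
    with t h₁ h₂
  rwa [h₂]

lemma ae_abs_inner_div_inner_condExp_le [IsFiniteMeasure μ] (hm : m ≤ m0)
    (hg : Integrable g μ) {v w : E} {R c : ℝ} (hc : 0 < c) (hgv : ∀ᵐ t ∂μ, c ≤ ⟪g t, v⟫)
    (hgw : ∀ᵐ t ∂μ, |⟪g t, w⟫| ≤ R) :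
    ∀ᵐ t ∂μ, |⟪μ[g|m] t, w⟫ / ⟪μ[g|m] t, v⟫| ≤ R / c := by
  filter_upwards [ae_le_inner_condExp hm hg hgv, ae_abs_inner_condExp_le hg hgw] with t h₁ h₂
  exact abs_div_le_div_of_le h₂ hc h₁

lemma inner_div_inner_condExp_mul_condExp_ae_eq (hg : Integrable g μ) {v w : E}
    (hv : ∀ᵐ t ∂μ, ⟪μ[g|m] t, v⟫ ≠ 0) (Z : ℝ) :
    (fun t => ⟪μ[g|m] t, w⟫ / ⟪μ[g|m] t, v⟫) * μ[fun t => ⟪g t, v⟫ / Z|m]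
      =ᵐ[μ] μ[fun t => ⟪g t, w⟫ / Z|m] := by
  have hdiv (u : E) : (fun t => ⟪g t, u⟫ / Z) = fun t => ⟪g t, Z⁻¹ • u⟫ :=
    funext fun t => by rw [real_inner_smul_right, div_eq_inv_mul]
  have hv' := inner_condExp_ae_eq (m := m) hg (Z⁻¹ • v)
  have hw' := inner_condExp_ae_eq (m := m) hg (Z⁻¹ • w)
  rw [← hdiv] at hv' hw'
  filter_upwards [hv, hv', hw'] with t ht hv' hw'
  simp only [Pi.mul_apply, ← hv', ← hw', real_inner_smul_right]
  field_simp

theorem martingale_inner_div_inner_condExp {ι : Type*} [Preorder ι] [IsFiniteMeasure μ]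
    {ℱ : Filtration ι m0} (hg : Integrable g μ) {v w : E} (hgv : ∀ᵐ t ∂μ, 0 ≤ ⟪g t, v⟫)
    (hv : ∀ i, ∀ᵐ t ∂μ, ⟪μ[g|ℱ i] t, v⟫ ≠ 0) {Z : ℝ} (hZ : 0 ≤ Z)
    (hint : ∀ i, Integrable (fun t => ⟪μ[g|ℱ i] t, w⟫ / ⟪μ[g|ℱ i] t, v⟫)
      (μ.withDensity fun t => ENNReal.ofReal (⟪g t, v⟫ / Z))) :
    Martingale (fun i t => ⟪μ[g|ℱ i] t, w⟫ / ⟪μ[g|ℱ i] t, v⟫) ℱ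
      (μ.withDensity fun t => ENNReal.ofReal (⟪g t, v⟫ / Z)) :=
  martingale_withDensity_of_mul_condExp_ae_eq ((hg.inner_const w).div_const Z)
    ((hg.inner_const v).div_const Z) (hgv.mono fun _ ht => div_nonneg ht hZ)
    (stronglyAdapted_inner_div_inner_condExp ℱ g v w) hint
    fun i => inner_div_inner_condExp_mul_condExp_ae_eq hg (hv i) Z

end Inner

end MeasureTheory

/-- For a C¹ curve `γ` with `⟨γ'(t),v⟩ ≥ c > 0` on `I = [a,b]`, a
filtration `(Σ_p)` of sub-σ-algebras of the Borel σ-algebra, `β_p = E[γ'|Σ_p]` (w.r.t.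
Lebesgue measure on `I`) and the probability measure
`μ^v(A) = (∫_A ⟨γ',v⟩)/(∫_I ⟨γ',v⟩)`: one has `⟨β_p,v⟩ ≥ c` a.e., the sequence
`X_p = ⟨β_p,v^⊥⟩/⟨β_p,v⟩` is a martingale w.r.t. `(Σ_p)` and `μ^v`, `|X_p| ≤ 1/c`
`μ^v`-a.e., and `‖X_p‖_{L²(μ^v)} ≤ 1/c`. -/
theorem stmt15 (v : E2) (hv : v ∈ sphere (0:E2) 1) (c : ℝ) (hc : 0 < c)
    (a b : ℝ) (γ γ' : ℝ → E2) (hγ : IsC1Curve a b γ γ')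
    (hdir : ∀ t ∈ Set.Icc a b, c ≤ ⟪γ' t, v⟫)
    (ℱ : Filtration ℕ (Real.measurableSpace))
    (β : ℕ → ℝ → E2) (hβ : ∀ p, β p = (volume.restrict (Set.Icc a b))[γ'|ℱ p])
    (μv : Measure ℝ)
    (hμv : μv = (volume.restrict (Set.Icc a b)).withDensity
      (fun t => ENNReal.ofReal (⟪γ' t, v⟫ / ∫ s in Set.Icc a b, ⟪γ' s, v⟫)))
    (X : ℕ → ℝ → ℝ) (hX : ∀ p t, X p t = ⟪β p t, perp v⟫ / ⟪β p t, v⟫) :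
    (∀ p : ℕ, ∀ᵐ t ∂(volume.restrict (Set.Icc a b)), c ≤ ⟪β p t, v⟫) ∧
    (∀ p : ℕ, Integrable (X p) μv) ∧
    Martingale X ℱ μv ∧
    (∀ p : ℕ, ∀ᵐ t ∂μv, |X p t| ≤ 1 / c) ∧
    (∀ p : ℕ, eLpNorm (X p) 2 μv ≤ ENNReal.ofReal (1 / c)) := by
  obtain ⟨hab, hγ'_cont, -, hγ'_norm⟩ := hγ
  set μ₀ := volume.restrict (Icc a b)
  have hX_eq : X = fun p t => ⟪μ₀[γ'|ℱ p] t, perp v⟫ / ⟪μ₀[γ'|ℱ p] t, v⟫ := by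
    ext p t
    rw [hX, hβ]
  subst hX_eq
  simp only [hβ]
  have hγ'_int : Integrable γ' μ₀ := hγ'_cont.integrableOn_Icc
  have hγ'_v : ∀ᵐ t ∂μ₀, c ≤ ⟪γ' t, v⟫ := (ae_restrict_mem measurableSet_Icc).mono hdir
  have hγ'_perp : ∀ᵐ t ∂μ₀, |⟪γ' t, perp v⟫| ≤ 1 := (ae_restrict_mem measurableSet_Icc).mono
    fun t ht => abs_inner_perp_le_one (hγ'_norm t ht) (mem_sphere_zero_iff_norm.mp hv)
  have hβ_v (p : ℕ) := ae_le_inner_condExp (ℱ.le p) hγ'_int hγ'_v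
  have hZ := setIntegral_Icc_pos_of_le hab hc (hγ'_int.inner_const v) hdir
  have hγ'_v_nonneg := hγ'_v.mono fun _ ht => hc.le.trans ht
  have : IsProbabilityMeasure μv :=
    hμv ▸ isProbabilityMeasure_withDensity_div_integral (hγ'_int.inner_const v) hγ'_v_nonneg hZ
  have hμv_ac : μv ≪ μ₀ := hμv ▸ withDensity_absolutelyContinuous μ₀ _
  have hX_bdd (p : ℕ) :=
    (ae_abs_inner_div_inner_condExp_le (ℱ.le p) hγ'_int hc hγ'_v hγ'_perp).filter_mono hμv_ac.ae_le
  have hX_int (p : ℕ) := Integrable.of_bound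
    ((stronglyAdapted_inner_div_inner_condExp ℱ γ' v (perp v) p).mono (ℱ.le p)).aestronglyMeasurable
    (1 / c) (hX_bdd p)
  refine ⟨hβ_v, hX_int, ?_, hX_bdd, fun p => ?_⟩
  · subst hμv
    exact martingale_inner_div_inner_condExp hγ'_int hγ'_v_nonneg
      (fun p => (hβ_v p).mono fun _ ht => (hc.trans_le ht).ne') hZ.le hX_int
  · simpa using eLpNorm_le_of_ae_bound (p := 2)
      ((hX_bdd p).mono fun _ ht => ht.trans_eq' (Real.norm_eq_abs _))

end
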